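/- arXiv:2509.17681 — 9 statements merged into one kernel-verified Lean document; each statement's English description precedes it below -/
import Mathlib

section
/- Let R be a commutative ring, let J and K be ideals of R, and let b ∈ R be an element such that k * b ∈ J for every k ∈ K. Let μ be a natural number which is a saturation index of J with respect to b, i.e. J : ⟨b^μ⟩ = J : ⟨b^(μ+1)⟩. Then J = (J + K) ∩ (J + ⟨b^μ⟩), where ⟨b^μ⟩ denotes the principal ideal generated by b^μ. -/
/-- Extended splitting lemma: if `k * b ∈ J` for every `k ∈ K` and `μ` is a
saturation index of `J` with respect to `b`, then `J = (J + K) ⊓ (J + ⟨b^μ⟩)`. -/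
theorem extended_splitting_lemma {R : Type*} [CommRing R] (J K : Ideal R) (b : R)
    (hKb : ∀ k ∈ K, k * b ∈ J) (μ : ℕ)
    (hsat : J.colon (Ideal.span {b ^ μ}) = J.colon (Ideal.span {b ^ (μ + 1)})) :
    J = (J + K) ⊓ (J + Ideal.span {b ^ μ}) := by
  apply le_antisymm
  · exact le_inf (le_sup_left) (le_sup_left)
  · rintro x ⟨hx1, hx2⟩
    obtain ⟨j, hj, k, hk, rfl⟩ := Submodule.mem_sup.mp hx1
    obtain ⟨j', hj', s, hs, hjs⟩ := Submodule.mem_sup.mp hx2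
    obtain ⟨r, rfl⟩ := Ideal.mem_span_singleton.mp hs
    -- (j + k) * b ∈ J
    have hxb : (j + k) * b ∈ J := by
      rw [add_mul]
      exact J.add_mem (J.mul_mem_right b hj) (hKb k hk)
    have hrb : r * b ^ (μ + 1) ∈ J := by
      have : (j' + b ^ μ * r) * b ∈ J := hjs ▸ hxb
      rw [add_mul] at this
      have h2 : b ^ μ * r * b ∈ J := by
        have := J.sub_mem this (J.mul_mem_right b hj')
        simpa using this
      have heq : r * b ^ (μ + 1) = b ^ μ * r * b := by ring
      rw [heq]; exact h2
    have hr : r ∈ J.colon (Ideal.span {b ^ μ}) := by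
      rw [hsat, Ideal.mem_colon_span_singleton]
      exact hrb
    rw [Ideal.mem_colon_span_singleton] at hr
    rw [← hjs]
    exact J.add_mem hj' (by rw [mul_comm]; exact hr)
end

section
/- The affine zero set of the syzygy ideal decomposes as the union of its intersection with the zero set of the Baikov polynomial and the zero set of the critical ideal: for every x : (ι ⊕ π) → F, x lies in the zero locus of J_syz if and only if either (x lies in the zero locus of J_syz and eval x B = 0), or (eval x (pderiv (Sum.inl i) B) = 0 for all i : ι and x (Sum.inr e) = 0 for all e : π). Equivalently, V(J_syz) = (V(J_syz) ∩ V(⟨B⟩)) ∪ V(J_crit) as subsets of (ι ⊕ π) → F. -/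
open MvPolynomial

/-- The syzygy ideal associated to the Baikov polynomial `B`. -/
noncomputable def baikovSyzygyIdeal {F : Type} [Field F] {ι π : Type}
    (B : MvPolynomial (ι ⊕ π) F) : Ideal (MvPolynomial (ι ⊕ π) F) :=
  Ideal.span ((Set.range fun i : ι => pderiv (Sum.inl i) B) ∪
    (Set.range fun e : π => X (Sum.inr e) * B) ∪
    (Set.range fun e : π => X (Sum.inr e) * pderiv (Sum.inr e) B))

lemma eval_zero_of_span {F : Type} [Field F] {σ : Type} (x : σ → F)
    (s : Set (MvPolynomial σ F)) (hs : ∀ p ∈ s, eval x p = 0) :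
    ∀ p ∈ Ideal.span s, eval x p = 0 := by
  intro p hp
  have : Ideal.span s ≤ RingHom.ker (eval x) := Ideal.span_le.mpr hs
  exact this hp

/-- The zero locus of the syzygy ideal decomposes into its intersection with the
zero set of `B` union the critical locus of `B` on the maximal cut. -/
theorem zeroLocus_syzygyIdeal_decomposition {F : Type} [Field F] {ι π : Type}
    [Fintype ι] [Fintype π] (B : MvPolynomial (ι ⊕ π) F) (x : (ι ⊕ π) → F) :
    (∀ p ∈ baikovSyzygyIdeal B, eval x p = 0) ↔
      ((∀ p ∈ baikovSyzygyIdeal B, eval x p = 0) ∧ eval x B = 0) ∨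
      ((∀ i : ι, eval x (pderiv (Sum.inl i) B) = 0) ∧ ∀ e : π, x (Sum.inr e) = 0) := by
  constructor
  · intro h
    have hd : ∀ i : ι, eval x (pderiv (Sum.inl i) B) = 0 := by
      intro i
      exact h _ (Ideal.subset_span (Or.inl (Or.inl ⟨i, rfl⟩)))
    have hXB : ∀ e : π, x (Sum.inr e) * eval x B = 0 := by
      intro e
      have := h _ (Ideal.subset_span (Or.inl (Or.inr ⟨e, rfl⟩)))
      simpa using this
    by_cases hB : eval x B = 0
    · exact Or.inl ⟨h, hB⟩
    · refine Or.inr ⟨hd, fun e => ?_⟩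
      have := hXB e
      rcases mul_eq_zero.mp this with h1 | h1
      · exact h1
      · exact absurd h1 hB
  · rintro (⟨h, _⟩ | ⟨hd, hx⟩)
    · exact h
    · apply eval_zero_of_span
      rintro p (( ⟨i, rfl⟩ | ⟨e, rfl⟩) | ⟨e, rfl⟩)
      · exact hd i
      · simp [hx e]
      · simp [hx e]
end

section
/- Every admissible a₀-part of a syzygy vanishes on the critical locus of log B on the maximal cut: let p ∈ R satisfy p * B ∈ J_syz, and let x : (ι ⊕ π) → F be a point such that eval x B ≠ 0, eval x (pderiv (Sum.inl i) B) = 0 for all i : ι, and x (Sum.inr e) = 0 for all e : π. Then eval x p = 0. -/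
open MvPolynomial

/-- Every admissible `a₀`-part of a syzygy vanishes on the critical locus of
`log B` on the maximal cut. -/
theorem a0_vanishes_on_critical_locus {F : Type} [Field F] {ι π : Type}
    [Fintype ι] [Fintype π] (B p : MvPolynomial (ι ⊕ π) F)
    (hp : p * B ∈ baikovSyzygyIdeal B) (x : (ι ⊕ π) → F)
    (hB : eval x B ≠ 0)
    (hcrit : ∀ i : ι, eval x (pderiv (Sum.inl i) B) = 0)
    (hcut : ∀ e : π, x (Sum.inr e) = 0) :
    eval x p = 0 := by
  have hle : baikovSyzygyIdeal B ≤ RingHom.ker (eval x) := by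
    rw [baikovSyzygyIdeal, Ideal.span_le]
    rintro q ((⟨i, rfl⟩ | ⟨e, rfl⟩) | ⟨e, rfl⟩) <;>
      simp [RingHom.mem_ker, hcrit, hcut]
  have h0 : eval x (p * B) = 0 := hle hp
  rw [map_mul] at h0
  exact (mul_eq_zero.mp h0).resolve_right hB
end

section
/- The syzygy ideal splits as the intersection of the 'singular' and 'critical' ideals: if μ is a natural number with J_syz : ⟨B^μ⟩ = J_syz : ⟨B^(μ+1)⟩ (a saturation index of J_syz with respect to B), then J_syz = (J_syz + ⟨B^μ⟩) ∩ J_crit. -/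
open MvPolynomial

/-- The critical ideal associated to the Baikov polynomial `B`. -/
noncomputable def baikovCriticalIdeal {F : Type} [Field F] {ι π : Type}
    (B : MvPolynomial (ι ⊕ π) F) : Ideal (MvPolynomial (ι ⊕ π) F) :=
  Ideal.span ((Set.range fun i : ι => pderiv (Sum.inl i) B) ∪
    (Set.range fun e : π => (X (Sum.inr e) : MvPolynomial (ι ⊕ π) F)))

/-- The syzygy ideal splits as the intersection of the singular and critical ideals. -/
theorem syzygyIdeal_splitting {F : Type} [Field F] {ι π : Type}
    [Fintype ι] [Fintype π] (B : MvPolynomial (ι ⊕ π) F) (μ : ℕ)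
    (hsat : (baikovSyzygyIdeal B).colon (Ideal.span {B ^ μ}) =
      (baikovSyzygyIdeal B).colon (Ideal.span {B ^ (μ + 1)})) :
    baikovSyzygyIdeal B =
      (baikovSyzygyIdeal B + Ideal.span {B ^ μ}) ⊓ baikovCriticalIdeal B := by
  have hsc : baikovSyzygyIdeal B ≤ baikovCriticalIdeal B := by
    rw [baikovSyzygyIdeal, Ideal.span_le]
    rintro p ((⟨i, rfl⟩ | ⟨e, rfl⟩) | ⟨e, rfl⟩)
    · exact Ideal.subset_span (Or.inl ⟨i, rfl⟩)
    · exact Ideal.mul_mem_right _ _ (Ideal.subset_span (Or.inr ⟨e, rfl⟩))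
    · exact Ideal.mul_mem_right _ _ (Ideal.subset_span (Or.inr ⟨e, rfl⟩))
  have key : ∀ p ∈ baikovCriticalIdeal B, p * B ∈ baikovSyzygyIdeal B := by
    intro p hp
    refine Submodule.span_induction ?_ ?_ ?_ ?_ hp
    · rintro q (⟨i, rfl⟩ | ⟨e, rfl⟩)
      · exact Ideal.mul_mem_right _ _
          (Ideal.subset_span (Or.inl (Or.inl ⟨i, rfl⟩)))
      · exact Ideal.subset_span (Or.inl (Or.inr ⟨e, rfl⟩))
    · simp
    · intro a b _ _ ha hb
      rw [add_mul]
      exact Ideal.add_mem _ ha hb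
    · intro r a _ ha
      rw [smul_eq_mul, mul_assoc]
      exact Ideal.mul_mem_left _ _ ha
  apply le_antisymm
  · exact le_inf le_sup_left hsc
  · rintro f ⟨hf1, hf2⟩
    obtain ⟨g, hg, y, hy, rfl⟩ := Submodule.mem_sup.mp hf1
    obtain ⟨h, rfl⟩ := Ideal.mem_span_singleton'.mp hy
    have hcrit : h * B ^ μ ∈ baikovCriticalIdeal B := by
      have := (baikovCriticalIdeal B).sub_mem hf2 (hsc hg)
      simpa using this
    have hB : h * B ^ (μ + 1) ∈ baikovSyzygyIdeal B := by
      have := key _ hcrit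
      rwa [mul_assoc, ← pow_succ] at this
    have hmem : h ∈ (baikovSyzygyIdeal B).colon (Ideal.span {B ^ (μ + 1)}) :=
      Ideal.mem_colon_span_singleton.mpr hB
    rw [← hsat] at hmem
    exact (baikovSyzygyIdeal B).add_mem hg (Ideal.mem_colon_span_singleton.mp hmem)
end

section
/- If the critical ideal is saturated with respect to the Baikov polynomial, i.e. J_crit : ⟨B⟩ = J_crit, then the colon ideal of the syzygy ideal by the Baikov polynomial equals the critical ideal: J_syz : ⟨B⟩ = J_crit. -/
open MvPolynomial

/-- If `J_crit : ⟨B⟩ = J_crit`, then `J_syz : ⟨B⟩ = J_crit`. -/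
theorem colon_syzygyIdeal_eq_criticalIdeal {F : Type} [Field F] {ι π : Type}
    [Fintype ι] [Fintype π] (B : MvPolynomial (ι ⊕ π) F)
    (hsat : (baikovCriticalIdeal B).colon (Ideal.span {B}) = baikovCriticalIdeal B) :
    (baikovSyzygyIdeal B).colon (Ideal.span {B}) = baikovCriticalIdeal B := by
  have hsub : baikovSyzygyIdeal B ≤ baikovCriticalIdeal B := by
    rw [baikovSyzygyIdeal, Ideal.span_le]
    rintro x ((⟨i, rfl⟩ | ⟨e, rfl⟩) | ⟨e, rfl⟩)
    · exact Ideal.subset_span (Or.inl ⟨i, rfl⟩)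
    · exact Ideal.mul_mem_right _ _ (Ideal.subset_span (Or.inr ⟨e, rfl⟩))
    · exact Ideal.mul_mem_right _ _ (Ideal.subset_span (Or.inr ⟨e, rfl⟩))
  apply le_antisymm
  · intro p hp
    rw [Ideal.mem_colon_span_singleton] at hp
    rw [← hsat, Ideal.mem_colon_span_singleton]
    exact hsub hp
  · rw [baikovCriticalIdeal, Ideal.span_le]
    rintro x (⟨i, rfl⟩ | ⟨e, rfl⟩) <;>
      rw [SetLike.mem_coe, Ideal.mem_colon_span_singleton]
    · exact Ideal.mul_mem_right _ _
        (Ideal.subset_span (Or.inl (Or.inl ⟨i, rfl⟩)))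
    · exact Ideal.subset_span (Or.inl (Or.inr ⟨e, rfl⟩))
end

section
/- If the saturation index of the syzygy ideal with respect to the Baikov polynomial is 1, i.e. J_syz : ⟨B⟩ = J_syz : ⟨B^2⟩, then the colon ideal of the syzygy ideal by the Baikov polynomial equals the colon ideal of the critical ideal by the Baikov polynomial: J_syz : ⟨B⟩ = J_crit : ⟨B⟩. -/
open MvPolynomial

/-- If the saturation index of `J_syz` with respect to `B` is 1, then
`J_syz : ⟨B⟩ = J_crit : ⟨B⟩`. -/
theorem colon_syzygyIdeal_eq_colon_criticalIdeal {F : Type} [Field F] {ι π : Type}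
    [Fintype ι] [Fintype π] (B : MvPolynomial (ι ⊕ π) F)
    (hsat : (baikovSyzygyIdeal B).colon (Ideal.span {B}) =
      (baikovSyzygyIdeal B).colon (Ideal.span {B ^ 2})) :
    (baikovSyzygyIdeal B).colon (Ideal.span {B}) =
      (baikovCriticalIdeal B).colon (Ideal.span {B}) := by
  -- J_syz ⊆ J_crit
  have hsub : baikovSyzygyIdeal B ≤ baikovCriticalIdeal B := by
    rw [baikovSyzygyIdeal, Ideal.span_le]
    rintro x ((⟨i, rfl⟩ | ⟨e, rfl⟩) | ⟨e, rfl⟩)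
    · exact Ideal.subset_span (Or.inl ⟨i, rfl⟩)
    · exact Ideal.mul_mem_right _ _ (Ideal.subset_span (Or.inr ⟨e, rfl⟩))
    · exact Ideal.mul_mem_right _ _ (Ideal.subset_span (Or.inr ⟨e, rfl⟩))
  -- J_crit ≤ J_syz : ⟨B⟩
  have hmul : baikovCriticalIdeal B ≤ (baikovSyzygyIdeal B).colon (Ideal.span {B}) := by
    rw [baikovCriticalIdeal, Ideal.span_le]
    rintro x (⟨i, rfl⟩ | ⟨e, rfl⟩)
    · exact Ideal.mem_colon_span_singleton.mpr
        (Ideal.mul_mem_right _ _ (Ideal.subset_span (Or.inl (Or.inl ⟨i, rfl⟩))))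
    · exact Ideal.mem_colon_span_singleton.mpr (Ideal.subset_span (Or.inl (Or.inr ⟨e, rfl⟩)))
  apply le_antisymm
  · intro p hp
    exact Ideal.mem_colon_span_singleton.mpr (hsub (Ideal.mem_colon_span_singleton.mp hp))
  · intro p hp
    have h1 : p * B ∈ (baikovSyzygyIdeal B).colon (Ideal.span {B}) :=
      hmul (Ideal.mem_colon_span_singleton.mp hp)
    have h2 : p * B ^ 2 ∈ baikovSyzygyIdeal B := by
      have := Ideal.mem_colon_span_singleton.mp h1
      rw [sq, ← mul_assoc]; exact this
    rw [hsat]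
    exact Ideal.mem_colon_span_singleton.mpr h2
end

section
/- For every natural number μ ≥ 1, the colon ideal of the syzygy ideal by the Baikov polynomial is contained in the radical of the colon ideal of the critical ideal by B^μ: J_syz : ⟨B⟩ ⊆ radical (J_crit : ⟨B^μ⟩). -/
open MvPolynomial

/-- `J_syz : ⟨B⟩ ⊆ radical (J_crit : ⟨B^μ⟩)` for every `μ ≥ 1`. -/
theorem colon_syzygyIdeal_le_radical {F : Type} [Field F] {ι π : Type}
    [Fintype ι] [Fintype π] (B : MvPolynomial (ι ⊕ π) F) (μ : ℕ) (hμ : 1 ≤ μ) :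
    (baikovSyzygyIdeal B).colon (Ideal.span {B}) ≤
      ((baikovCriticalIdeal B).colon (Ideal.span {B ^ μ})).radical := by
  have hle : baikovSyzygyIdeal B ≤ baikovCriticalIdeal B := by
    rw [baikovSyzygyIdeal, Ideal.span_le]
    rintro x ((⟨i, rfl⟩ | ⟨e, rfl⟩) | ⟨e, rfl⟩)
    · exact Ideal.subset_span (Or.inl ⟨i, rfl⟩)
    · exact Ideal.mul_mem_right _ _ (Ideal.subset_span (Or.inr ⟨e, rfl⟩))
    · exact Ideal.mul_mem_right _ _ (Ideal.subset_span (Or.inr ⟨e, rfl⟩))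
  intro p hp
  apply Ideal.le_radical
  rw [Ideal.mem_colon_span_singleton] at hp ⊢
  obtain ⟨ν, rfl⟩ := Nat.exists_eq_add_of_le hμ
  rw [pow_add, pow_one, ← mul_assoc]
  exact Ideal.mul_mem_right _ _ (hle hp)
end

section
/- The module of critical syzygies is isomorphic to A₀ modulo the cut ideal: let M = R × (ι → R) × (π → R) × (π → R), let φ : M →ₗ[R] R be given by φ(a₀, a, ã, ā) = a₀ * B + (∑ i, a i * pderiv (Sum.inl i) B) + (∑ e, ã e * X (Sum.inr e) * B) + (∑ e, ā e * X (Sum.inr e) * pderiv (Sum.inr e) B), let Syz = ker φ, let 𝔠 : M →ₗ[R] R be the projection onto the first coordinate, and let ZSyz be the R-submodule of M spanned by the vectors v_e (e : π) with first coordinate X (Sum.inr e), third coordinate the indicator function −δ_e, and all other coordinates zero. Then ZSyz ⊆ Syz, the ideal J_cut is contained in the ideal A₀ = J_syz : ⟨B⟩, and the quotient R-module Syz / ((ker 𝔠 ⊓ Syz) + ZSyz) is isomorphic as an R-module to A₀ / J_cut (the quotient of A₀, viewed as an R-submodule of R, by its submodule J_cut). -/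
open MvPolynomial

/-- The cut ideal, generated by the propagator variables. -/
noncomputable def baikovCutIdeal (F : Type) [Field F] (ι π : Type) :
    Ideal (MvPolynomial (ι ⊕ π) F) :=
  Ideal.span (Set.range fun e : π => (X (Sum.inr e) : MvPolynomial (ι ⊕ π) F))

lemma baikov_syz_rep {F : Type} [Field F] {ι π : Type} [Fintype ι] [Fintype π]
    (B : MvPolynomial (ι ⊕ π) F) {p : MvPolynomial (ι ⊕ π) F}
    (hp : p ∈ baikovSyzygyIdeal B) :
    ∃ a : ι → MvPolynomial (ι ⊕ π) F, ∃ t u : π → MvPolynomial (ι ⊕ π) F,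
      p = (∑ i : ι, a i * pderiv (Sum.inl i) B)
        + (∑ e : π, t e * (X (Sum.inr e) * B))
        + (∑ e : π, u e * (X (Sum.inr e) * pderiv (Sum.inr e) B)) := by
  set g : ι ⊕ (π ⊕ π) → MvPolynomial (ι ⊕ π) F :=
    Sum.elim (fun i => pderiv (Sum.inl i) B)
      (Sum.elim (fun e => X (Sum.inr e) * B)
        (fun e => X (Sum.inr e) * pderiv (Sum.inr e) B)) with hg
  have hre : baikovSyzygyIdeal B = Submodule.span (MvPolynomial (ι ⊕ π) F) (Set.range g) := by
    rw [baikovSyzygyIdeal, Ideal.submodule_span_eq, hg, Set.Sum.elim_range,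
      Set.Sum.elim_range, Set.union_assoc]
  rw [hre, Submodule.mem_span_range_iff_exists_fun] at hp
  obtain ⟨cf, hcf⟩ := hp
  refine ⟨fun i => cf (Sum.inl i), fun e => cf (Sum.inr (Sum.inl e)),
    fun e => cf (Sum.inr (Sum.inr e)), ?_⟩
  rw [← hcf, Fintype.sum_sum_type, Fintype.sum_sum_type]
  simp [hg, smul_eq_mul, add_assoc]

lemma baikov_cut_rep {F : Type} [Field F] {ι π : Type} [Fintype π]
    {p : MvPolynomial (ι ⊕ π) F} (hp : p ∈ baikovCutIdeal F ι π) :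
    ∃ r : π → MvPolynomial (ι ⊕ π) F,
      p = ∑ e : π, r e * X (Sum.inr e) := by
  rw [baikovCutIdeal, ← Ideal.submodule_span_eq, Submodule.mem_span_range_iff_exists_fun] at hp
  obtain ⟨r, hr⟩ := hp
  exact ⟨r, by rw [← hr]; simp [smul_eq_mul]⟩

set_option maxHeartbeats 2000000 in
/-- The module of critical syzygies `Syz/((ker 𝔠 ⊓ Syz) + ZSyz)` is isomorphic to
`A₀ / J_cut`, where `A₀ = J_syz : ⟨B⟩`; moreover `ZSyz ⊆ Syz` and `J_cut ⊆ A₀`. -/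
theorem criticalSyzygies_iso_A0_mod_cut {F : Type} [Field F] {ι π : Type}
    [Fintype ι] [Fintype π] [DecidableEq π] (B : MvPolynomial (ι ⊕ π) F)
    (φ : (MvPolynomial (ι ⊕ π) F × (ι → MvPolynomial (ι ⊕ π) F) ×
          (π → MvPolynomial (ι ⊕ π) F) × (π → MvPolynomial (ι ⊕ π) F))
        →ₗ[MvPolynomial (ι ⊕ π) F] MvPolynomial (ι ⊕ π) F)
    (hφ : ∀ v : MvPolynomial (ι ⊕ π) F × (ι → MvPolynomial (ι ⊕ π) F) ×
          (π → MvPolynomial (ι ⊕ π) F) × (π → MvPolynomial (ι ⊕ π) F),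
      φ v = v.1 * B + (∑ i : ι, v.2.1 i * pderiv (Sum.inl i) B)
        + (∑ e : π, v.2.2.1 e * (X (Sum.inr e) * B))
        + (∑ e : π, v.2.2.2 e * (X (Sum.inr e) * pderiv (Sum.inr e) B)))
    (Syz : Submodule (MvPolynomial (ι ⊕ π) F)
      (MvPolynomial (ι ⊕ π) F × (ι → MvPolynomial (ι ⊕ π) F) ×
        (π → MvPolynomial (ι ⊕ π) F) × (π → MvPolynomial (ι ⊕ π) F)))
    (hSyz : Syz = LinearMap.ker φ)
    (c : (MvPolynomial (ι ⊕ π) F × (ι → MvPolynomial (ι ⊕ π) F) ×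
          (π → MvPolynomial (ι ⊕ π) F) × (π → MvPolynomial (ι ⊕ π) F))
        →ₗ[MvPolynomial (ι ⊕ π) F] MvPolynomial (ι ⊕ π) F)
    (hc : c = LinearMap.fst (MvPolynomial (ι ⊕ π) F) (MvPolynomial (ι ⊕ π) F)
      ((ι → MvPolynomial (ι ⊕ π) F) ×
        (π → MvPolynomial (ι ⊕ π) F) × (π → MvPolynomial (ι ⊕ π) F)))
    (ZSyz : Submodule (MvPolynomial (ι ⊕ π) F)
      (MvPolynomial (ι ⊕ π) F × (ι → MvPolynomial (ι ⊕ π) F) ×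
        (π → MvPolynomial (ι ⊕ π) F) × (π → MvPolynomial (ι ⊕ π) F)))
    (hZSyz : ZSyz = Submodule.span (MvPolynomial (ι ⊕ π) F)
      (Set.range fun e : π =>
        ((X (Sum.inr e) : MvPolynomial (ι ⊕ π) F), 0, -(Pi.single e 1), 0)))
    (A₀ : Ideal (MvPolynomial (ι ⊕ π) F))
    (hA₀ : A₀ = (baikovSyzygyIdeal B).colon (Ideal.span {B})) :
    ZSyz ≤ Syz ∧ baikovCutIdeal F ι π ≤ A₀ ∧
      Nonempty ((↥Syz ⧸ Submodule.comap Syz.subtype ((LinearMap.ker c ⊓ Syz) ⊔ ZSyz))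
        ≃ₗ[MvPolynomial (ι ⊕ π) F]
        (↥A₀ ⧸ Submodule.comap A₀.subtype (baikovCutIdeal F ι π))) := by
  subst hSyz hc hZSyz hA₀
  -- generators
  have hg1 : ∀ i : ι, pderiv (Sum.inl i) B ∈ baikovSyzygyIdeal B := fun i =>
    Ideal.subset_span (Set.mem_union_left _ (Set.mem_union_left _ ⟨i, rfl⟩))
  have hg2 : ∀ e : π, X (Sum.inr e) * B ∈ baikovSyzygyIdeal B := fun e =>
    Ideal.subset_span (Set.mem_union_left _ (Set.mem_union_right _ ⟨e, rfl⟩))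
  have hg3 : ∀ e : π, X (Sum.inr e) * pderiv (Sum.inr e) B ∈ baikovSyzygyIdeal B := fun e =>
    Ideal.subset_span (Set.mem_union_right _ ⟨e, rfl⟩)
  have hXcut : ∀ e : π, (X (Sum.inr e) : MvPolynomial (ι ⊕ π) F) ∈ baikovCutIdeal F ι π := fun e =>
    Ideal.subset_span ⟨e, rfl⟩
  -- ZSyz ⊆ Syz
  have hZker : ∀ e : π,
      ((X (Sum.inr e) : MvPolynomial (ι ⊕ π) F), (0 : ι → MvPolynomial (ι ⊕ π) F), -(Pi.single e 1), (0 : π → MvPolynomial (ι ⊕ π) F)) ∈ LinearMap.ker φ := by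
    intro e
    rw [LinearMap.mem_ker, hφ]
    simp [Pi.single_apply, ite_mul, Finset.sum_ite_eq]
  have hZS : Submodule.span (MvPolynomial (ι ⊕ π) F)
      (Set.range fun e : π => ((X (Sum.inr e) : MvPolynomial (ι ⊕ π) F), (0 : ι → MvPolynomial (ι ⊕ π) F), -(Pi.single e 1), (0 : π → MvPolynomial (ι ⊕ π) F)))
      ≤ LinearMap.ker φ := by
    rw [Submodule.span_le]
    rintro _ ⟨e, rfl⟩
    exact hZker e
  refine ⟨hZS, ?_, ?_⟩
  · rw [baikovCutIdeal, Ideal.span_le]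
    rintro _ ⟨e, rfl⟩
    rw [SetLike.mem_coe, Ideal.mem_colon_span_singleton]
    exact hg2 e
  · -- main isomorphism
    set A0 : Ideal (MvPolynomial (ι ⊕ π) F) := (baikovSyzygyIdeal B).colon (Ideal.span {B}) with hA0
    have hmem : ∀ v : MvPolynomial (ι ⊕ π) F × (ι → MvPolynomial (ι ⊕ π) F) × (π → MvPolynomial (ι ⊕ π) F) × (π → MvPolynomial (ι ⊕ π) F), v ∈ LinearMap.ker φ → v.1 ∈ A0 := by
      intro v hv
      rw [LinearMap.mem_ker, hφ] at hv
      rw [hA0, Ideal.mem_colon_span_singleton]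
      have hv1 : v.1 * B = -(∑ i : ι, v.2.1 i * pderiv (Sum.inl i) B)
          - (∑ e : π, v.2.2.1 e * (X (Sum.inr e) * B))
          - (∑ e : π, v.2.2.2 e * (X (Sum.inr e) * pderiv (Sum.inr e) B)) := by
        linear_combination hv
      rw [hv1]
      refine sub_mem (sub_mem (neg_mem (Ideal.sum_mem _ fun i _ =>
        Ideal.mul_mem_left _ _ (hg1 i))) (Ideal.sum_mem _ fun e _ =>
        Ideal.mul_mem_left _ _ (hg2 e))) (Ideal.sum_mem _ fun e _ =>
        Ideal.mul_mem_left _ _ (hg3 e))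
    set N : Submodule (MvPolynomial (ι ⊕ π) F) ↥A0 := Submodule.comap A0.subtype (baikovCutIdeal F ι π) with hN
    set f : ↥(LinearMap.ker φ) →ₗ[MvPolynomial (ι ⊕ π) F] ↥A0 :=
      LinearMap.codRestrict (A0 : Submodule (MvPolynomial (ι ⊕ π) F) (MvPolynomial (ι ⊕ π) F))
        ((LinearMap.fst (MvPolynomial (ι ⊕ π) F) (MvPolynomial (ι ⊕ π) F) _).comp (LinearMap.ker φ).subtype)
        (fun x => hmem x x.2) with hf
    set ψ : ↥(LinearMap.ker φ) →ₗ[MvPolynomial (ι ⊕ π) F] (↥A0 ⧸ N) := N.mkQ.comp f with hψ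
    have hsurj : Function.Surjective ψ := by
      intro y
      obtain ⟨⟨p, hp⟩, rfl⟩ := N.mkQ_surjective y
      have hpB : p * B ∈ baikovSyzygyIdeal B := by
        rwa [hA0, Ideal.mem_colon_span_singleton] at hp
      obtain ⟨a, t, u, hrep⟩ := baikov_syz_rep B hpB
      have hxk : (p, -a, -t, -u) ∈ LinearMap.ker φ := by
        rw [LinearMap.mem_ker, hφ]
        simp only [Pi.neg_apply, neg_mul, Finset.sum_neg_distrib]
        linear_combination hrep
      refine ⟨⟨_, hxk⟩, ?_⟩
      show N.mkQ (f ⟨(p, -a, -t, -u), hxk⟩) = N.mkQ ⟨p, hp⟩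
      congr 1
    have hker : LinearMap.ker ψ = Submodule.comap (LinearMap.ker φ).subtype
        ((LinearMap.ker (LinearMap.fst (MvPolynomial (ι ⊕ π) F) (MvPolynomial (ι ⊕ π) F) _) ⊓ LinearMap.ker φ) ⊔
          Submodule.span (MvPolynomial (ι ⊕ π) F) (Set.range fun e : π =>
            ((X (Sum.inr e) : MvPolynomial (ι ⊕ π) F), (0 : ι → MvPolynomial (ι ⊕ π) F), -(Pi.single e 1), (0 : π → MvPolynomial (ι ⊕ π) F)))) := by
      ext v
      have hv1 : v ∈ LinearMap.ker ψ ↔ (v : MvPolynomial (ι ⊕ π) F × (ι → MvPolynomial (ι ⊕ π) F) × (π → MvPolynomial (ι ⊕ π) F) × (π → MvPolynomial (ι ⊕ π) F)).1 ∈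
          baikovCutIdeal F ι π := by
        rw [hψ, LinearMap.mem_ker, LinearMap.comp_apply, Submodule.mkQ_apply,
          Submodule.Quotient.mk_eq_zero, hN, Submodule.mem_comap]
        rfl
      rw [hv1, Submodule.mem_comap]
      constructor
      · intro hcv
        obtain ⟨r, hr⟩ := baikov_cut_rep hcv
        set w : MvPolynomial (ι ⊕ π) F × (ι → MvPolynomial (ι ⊕ π) F) × (π → MvPolynomial (ι ⊕ π) F) × (π → MvPolynomial (ι ⊕ π) F) :=
          ∑ e : π, r e • (((X (Sum.inr e) : MvPolynomial (ι ⊕ π) F), (0 : ι → MvPolynomial (ι ⊕ π) F), -(Pi.single e 1), (0 : π → MvPolynomial (ι ⊕ π) F)) :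
            MvPolynomial (ι ⊕ π) F × (ι → MvPolynomial (ι ⊕ π) F) × (π → MvPolynomial (ι ⊕ π) F) × (π → MvPolynomial (ι ⊕ π) F))
          with hw
        have hwZ : w ∈ Submodule.span (MvPolynomial (ι ⊕ π) F) (Set.range fun e : π =>
            ((X (Sum.inr e) : MvPolynomial (ι ⊕ π) F), (0 : ι → MvPolynomial (ι ⊕ π) F), -(Pi.single e 1), (0 : π → MvPolynomial (ι ⊕ π) F))) :=
          Submodule.sum_mem _ fun e _ => Submodule.smul_mem _ _ (Submodule.subset_span ⟨e, rfl⟩)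
        have hw1 : w.1 = ∑ e : π, r e * X (Sum.inr e) := by
          rw [hw, Prod.fst_sum]
          simp [smul_eq_mul]
        have hsub : (v : MvPolynomial (ι ⊕ π) F × (ι → MvPolynomial (ι ⊕ π) F) × (π → MvPolynomial (ι ⊕ π) F) × (π → MvPolynomial (ι ⊕ π) F)) - w ∈
            LinearMap.ker (LinearMap.fst (MvPolynomial (ι ⊕ π) F) (MvPolynomial (ι ⊕ π) F) _) ⊓ LinearMap.ker φ := by
          refine Submodule.mem_inf.2 ⟨?_, ?_⟩
          · rw [LinearMap.mem_ker]
            simp only [LinearMap.fst_apply, Prod.fst_sub]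
            rw [hw1, ← hr, sub_self]
          · exact sub_mem v.2 (hZS hwZ)
        simpa using Submodule.add_mem _ (Submodule.mem_sup_left hsub) (Submodule.mem_sup_right hwZ)
      · intro hvm
        have hle : (LinearMap.ker (LinearMap.fst (MvPolynomial (ι ⊕ π) F) (MvPolynomial (ι ⊕ π) F) _) ⊓ LinearMap.ker φ) ⊔
            Submodule.span (MvPolynomial (ι ⊕ π) F) (Set.range fun e : π =>
              ((X (Sum.inr e) : MvPolynomial (ι ⊕ π) F), (0 : ι → MvPolynomial (ι ⊕ π) F), -(Pi.single e 1), (0 : π → MvPolynomial (ι ⊕ π) F)))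
            ≤ Submodule.comap (LinearMap.fst (MvPolynomial (ι ⊕ π) F) (MvPolynomial (ι ⊕ π) F)
              ((ι → MvPolynomial (ι ⊕ π) F) × (π → MvPolynomial (ι ⊕ π) F) × (π → MvPolynomial (ι ⊕ π) F))) (baikovCutIdeal F ι π) := by
          refine sup_le (le_trans inf_le_left ?_) ?_
          · intro x hx
            rw [Submodule.mem_comap, LinearMap.fst_apply]
            rw [LinearMap.mem_ker, LinearMap.fst_apply] at hx
            rw [hx]
            exact zero_mem _
          · rw [Submodule.span_le]
            rintro _ ⟨e, rfl⟩
            exact hXcut e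
        exact hle hvm
    exact ⟨(Submodule.quotEquivOfEq _ _ hker.symm).trans
      (LinearMap.quotKerEquivOfSurjective ψ hsurj)⟩
end

section
/- For every natural number Δ, define the Δ-shifted syzygy ideal J_syzΔ = Ideal.span ({pderiv (Sum.inl i) B | i : ι} ∪ {X (Sum.inr e) * pderiv (Sum.inr e) B | e : π} ∪ {X (Sum.inr e) * B^(1+Δ) | e : π}) and the inner ideal J' = Ideal.span ({pderiv (Sum.inl i) B | i : ι} ∪ {X (Sum.inr e) * pderiv (Sum.inr e) B | e : π}). Then J_syzΔ : ⟨B^(1+Δ)⟩ = (J' : ⟨B^(1+Δ)⟩) + J_cut. -/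
open MvPolynomial

/-- For the Δ-shifted syzygy ideal, `J_syzΔ : ⟨B^(1+Δ)⟩ = (J' : ⟨B^(1+Δ)⟩) + J_cut`. -/
theorem shifted_syzygyIdeal_colon {F : Type} [Field F] {ι π : Type}
    [Fintype ι] [Fintype π] (B : MvPolynomial (ι ⊕ π) F) (Δ : ℕ)
    (JsyzΔ : Ideal (MvPolynomial (ι ⊕ π) F))
    (hJsyzΔ : JsyzΔ = Ideal.span ((Set.range fun i : ι => pderiv (Sum.inl i) B) ∪
      (Set.range fun e : π => X (Sum.inr e) * pderiv (Sum.inr e) B) ∪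
      (Set.range fun e : π => X (Sum.inr e) * B ^ (1 + Δ))))
    (J' : Ideal (MvPolynomial (ι ⊕ π) F))
    (hJ' : J' = Ideal.span ((Set.range fun i : ι => pderiv (Sum.inl i) B) ∪
      (Set.range fun e : π => X (Sum.inr e) * pderiv (Sum.inr e) B))) :
    JsyzΔ.colon (Ideal.span {B ^ (1 + Δ)}) =
      J'.colon (Ideal.span {B ^ (1 + Δ)}) + baikovCutIdeal F ι π := by
  set f : MvPolynomial (ι ⊕ π) F := B ^ (1 + Δ) with hf
  -- key: JsyzΔ = J' ⊔ (J_cut * ⟨f⟩)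
  have hK : JsyzΔ = J' ⊔ baikovCutIdeal F ι π * Ideal.span {f} := by
    rw [hJsyzΔ, hJ', Ideal.span_union, baikovCutIdeal, Ideal.span_mul_span']
    congr 1
    congr 1
    ext p
    constructor
    · rintro ⟨e, rfl⟩
      exact ⟨X (Sum.inr e), ⟨e, rfl⟩, f, rfl, rfl⟩
    · rintro ⟨x, ⟨e, rfl⟩, y, rfl, rfl⟩
      exact ⟨e, rfl⟩
  apply le_antisymm
  · intro p hp
    rw [Ideal.mem_colon_span_singleton, hK] at hp
    obtain ⟨a, ha, c, hc, hac⟩ := Submodule.mem_sup.mp hp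
    obtain ⟨q, hq, rfl⟩ := Ideal.mem_mul_span_singleton.mp hc
    have h1 : p - q ∈ J'.colon (Ideal.span {f}) := by
      rw [Ideal.mem_colon_span_singleton, sub_mul]
      have : p * f - q * f = a := by rw [← hac]; ring
      rw [this]; exact ha
    have : p = (p - q) + q := by ring
    rw [this]
    exact Submodule.add_mem_sup h1 hq
  · apply sup_le
    · exact Submodule.colon_mono (hK ▸ le_sup_left) le_rfl
    · intro q hq
      rw [Ideal.mem_colon_span_singleton, hK]
      exact Ideal.mem_sup_right (Ideal.mem_mul_span_singleton.mpr ⟨q, hq, rfl⟩)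
end
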